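/- arXiv:math/0612311 — 2 statements merged into one kernel-verified Lean document; each statement's English description precedes it below -/
import Mathlib

section
/- Let (R, m) be a commutative noetherian local ring with m-adic completion R̂, and let a = a_1, ..., a_e be elements of m such that R/(a) is complete. Then the natural ring homomorphism R/(a) → R̂/(a)R̂ is an isomorphism. -/
/-!
For `J = (a)`: since `R` is noetherian and `R ⧸ J` is a finite `R`-module, its `m`-adic
completion is the base change `R̂ ⊗[R] R ⧸ J ≅ R̂ ⧸ J R̂`. The `m`-adic and `m (R ⧸ J)`-adic
topologies on `R ⧸ J` coincide, so if `R ⧸ J` is complete it is its own completion, and the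
composite `R ⧸ J ≅ (R ⧸ J)^ ≅ R̂ ⧸ J R̂` is the natural map.
-/

open IsLocalRing TensorProduct

namespace AdicCompletion

variable {R : Type*} [CommRing R] [IsNoetherianRing R] (I J : Ideal R)

noncomputable def quotientEquivQuotMap :
    AdicCompletion I (R ⧸ J) ≃ₗ[R]
      AdicCompletion I R ⧸ J.map (algebraMap R (AdicCompletion I R)) :=
  ((ofTensorProductEquivOfFiniteNoetherian I (R ⧸ J)).symm.restrictScalars R).trans <|
    (tensorQuotEquivQuotSMul _ J).trans <|
      (Submodule.quotEquivOfEq _ _ (Ideal.smul_top_eq_map J)).trans <|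
        Submodule.Quotient.restrictScalarsEquiv R _

theorem quotientEquivQuotMap_of_mk (r : R) :
    quotientEquivQuotMap I J (of I (R ⧸ J) (Ideal.Quotient.mk J r)) =
      Ideal.Quotient.mk _ (algebraMap R (AdicCompletion I R) r) := by
  simp only [quotientEquivQuotMap, LinearEquiv.trans_apply, LinearEquiv.restrictScalars_apply,
    ofTensorProductEquivOfFiniteNoetherian_symm_of, tensorQuotEquivQuotSMul_tmul_mk,
    Submodule.quotEquivOfEq_mk, Submodule.Quotient.restrictScalarsEquiv_mk,
    Algebra.algebraMap_eq_smul_one]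
  rfl

theorem quotientMap_algebraMap_bijective [IsAdicComplete I (R ⧸ J)] :
    Function.Bijective (Ideal.quotientMap (J.map (algebraMap R (AdicCompletion I R)))
      (algebraMap R (AdicCompletion I R)) Ideal.le_comap_map) := by
  have h : ⇑(Ideal.quotientMap (J.map (algebraMap R (AdicCompletion I R)))
      (algebraMap R (AdicCompletion I R)) Ideal.le_comap_map) =
      quotientEquivQuotMap I J ∘ of I (R ⧸ J) := by
    ext x
    obtain ⟨r, rfl⟩ := Ideal.Quotient.mk_surjective x
    simp [quotientEquivQuotMap_of_mk]
  rw [h]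
  exact (quotientEquivQuotMap I J).bijective.comp (of_bijective I _)

end AdicCompletion

theorem stmt0_general (R : Type*) [CommRing R] [IsLocalRing R] [IsNoetherianRing R]
    (e : ℕ) (a : Fin e → R)
    (hcomplete : IsAdicComplete
      ((maximalIdeal R).map (Ideal.Quotient.mk (Ideal.span (Set.range a))))
      (R ⧸ Ideal.span (Set.range a))) :
    Function.Bijective
      (Ideal.quotientMap
        ((Ideal.span (Set.range a)).map (algebraMap R (AdicCompletion (maximalIdeal R) R)))
        (algebraMap R (AdicCompletion (maximalIdeal R) R))
        Ideal.le_comap_map) := by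
  have : IsAdicComplete (maximalIdeal R) (R ⧸ Ideal.span (Set.range a)) :=
    (IsAdicComplete.map_algebraMap_iff _ _).mp hcomplete
  exact AdicCompletion.quotientMap_algebraMap_bijective _ _

theorem stmt0 (R : Type*) [CommRing R] [IsLocalRing R] [IsNoetherianRing R]
    (e : ℕ) (a : Fin e → R) (ha : ∀ i, a i ∈ maximalIdeal R)
    (hcomplete : IsAdicComplete
      ((maximalIdeal R).map (Ideal.Quotient.mk (Ideal.span (Set.range a))))
      (R ⧸ Ideal.span (Set.range a))) :
    Function.Bijective
      (Ideal.quotientMap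
        ((Ideal.span (Set.range a)).map (algebraMap R (AdicCompletion (maximalIdeal R) R)))
        (algebraMap R (AdicCompletion (maximalIdeal R) R))
        Ideal.le_comap_map) :=
  stmt0_general R e a hcomplete
end

section
/- Let R be a commutative noetherian local ring, a = a_1, ..., a_e a list of elements of the maximal ideal, and M a complex of R-modules whose homology modules are all finitely generated. Then inf{n : H_n(K(a) ⊗_R M) ≠ 0} = inf{n : H_n(M) ≠ 0} and sup{n : H_n(M) ≠ 0} ≤ sup{n : H_n(K(a) ⊗_R M) ≠ 0} ≤ e + sup{n : H_n(M) ≠ 0}, where K(a) denotes the Koszul complex on a. In particular, K(a) ⊗_R M is homologically bounded if and only if M is homologically bounded. -/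
/-!
Write `N = K(a₂, …, a_e) ⊗ M`, so that `K(a) ⊗ M = Cone(a₁ : N → N)`. The triangle of the cone
gives exact sequences `H_n N → H_n N → H_n(Cone) → H_{n-1} N`, the first map being
multiplication by `a₁`. Hence the homology of the cone is finitely generated (`R` is
noetherian); if `H_n(Cone) = 0`, multiplication by `a₁ ∈ 𝔪` is onto the finitely generated
`H_n N`, which then vanishes by Nakayama; and `H_n(Cone) ≠ 0` forces `H_n N ≠ 0` or
`H_{n-1} N ≠ 0`. By induction on `e`, the set of `n` with `H_n(K(a) ⊗ M) ≠ 0` contains the one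
for `M`, and each of its elements lies at most `e` degrees above an element of the latter.
The statements about `inf`, `sup` and boundedness only depend on these two properties.
-/

open CategoryTheory IsLocalRing

/-- The Koszul complex on the list `as`, tensored with the complex `M`:
iterated mapping cone of multiplication maps. -/
noncomputable def koszulTensor (A : Type) [CommRing A] :
    List A → CochainComplex (ModuleCat A) ℤ → CochainComplex (ModuleCat A) ℤ
  | [], M => M
  | a :: as, M => CochainComplex.mappingCone (a • 𝟙 (koszulTensor A as M))

/-- Homological degree `n` homology of a ℤ-indexed cochain complex. -/
noncomputable abbrev Hgl {A : Type} [CommRing A] (X : CochainComplex (ModuleCat A) ℤ)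
    (n : ℤ) : ModuleCat A := X.homology (-n)

open Limits Pointwise

lemma IsLocalRing.subsingleton_of_surjective_smul {R M : Type*} [CommRing R] [IsLocalRing R]
    [AddCommGroup M] [Module R M] [Module.Finite R M] {a : R} (ha : a ∈ maximalIdeal R)
    (h : Function.Surjective fun x : M => a • x) : Subsingleton M := by
  by_contra hM
  rw [not_subsingleton_iff_nontrivial] at hM
  refine Submodule.top_ne_pointwise_smul_of_mem_jacobson_annihilator (M := M)
    (maximalIdeal_le_jacobson _ ha) (top_le_iff.mp fun x _ => ?_).symm
  obtain ⟨y, rfl⟩ := h x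
  exact Submodule.smul_mem_pointwise_smul y a ⊤ trivial

lemma HomologicalComplex.homologyMap_smul {R C ι : Type*} [Semiring R] [Category C]
    [Preadditive C] [Linear R C] [CategoryWithHomology C] {c : ComplexShape ι}
    {K L : HomologicalComplex C c} (r : R) (φ : K ⟶ L) (i : ι) :
    homologyMap (r • φ) i = r • homologyMap φ i :=
  ShortComplex.homologyMap_smul ((shortComplexFunctor C c i).map φ) r

lemma ModuleCat.isZero_of_epi_smul {R : Type*} [CommRing R] [IsLocalRing R] {a : R}
    (ha : a ∈ maximalIdeal R) {N : ModuleCat R} (hN : Module.Finite R N) (h : Epi (a • 𝟙 N)) :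
    IsZero N :=
  have := IsLocalRing.subsingleton_of_surjective_smul ha ((ModuleCat.epi_iff_surjective _).mp h)
  isZero_of_subsingleton N

lemma CategoryTheory.ShortComplex.Exact.finite_X₂ {R : Type*} [CommRing R] [IsNoetherianRing R]
    {S : ShortComplex (ModuleCat R)} (hS : S.Exact) (h₁ : Module.Finite R S.X₁)
    (h₃ : Module.Finite R S.X₃) : Module.Finite R S.X₂ :=
  have := isNoetherian_of_range_eq_ker S.f.hom S.g.hom hS.moduleCat_range_eq_ker
  inferInstance

noncomputable def HomotopyCategory.homologyQuotientIso {C : Type*} [Category C] [Preadditive C]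
    [CategoryWithHomology C] (X : CochainComplex C ℤ) (i : ℤ) :
    (homologyFunctor C (ComplexShape.up ℤ) i).obj ((quotient C (ComplexShape.up ℤ)).obj X) ≅
      X.homology i :=
  (homologyFunctorFactors C (ComplexShape.up ℤ) i).app X

namespace CochainComplex.mappingCone

open HomotopyCategory ComplexShape

variable {C : Type*} [Category C] [Abelian C] {K L : CochainComplex C ℤ} (f : K ⟶ L)

-- The triangle `K → L → cone f → K⟦1⟧` gives exact sequences
-- `H^i K → H^i L → H^i(cone f) → H^{i+1} K`.
lemma isZero_homology_of_isZero {i : ℤ} (hL : IsZero (L.homology i))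
    (hK : IsZero (K.homology (i + 1))) : IsZero ((mappingCone f).homology i) :=
  (((homologyFunctor C (up ℤ) 0).homologySequence_exact₃ _
    (mappingCone_triangleh_distinguished f) i (i + 1) rfl).isZero_of_both_isZero
    (hL.of_iso (homologyQuotientIso L i)) (hK.of_iso (homologyQuotientIso K (i + 1)))).of_iso
    (homologyQuotientIso (mappingCone f) i).symm

lemma epi_homologyMap_of_isZero_homology {i : ℤ} (h : IsZero ((mappingCone f).homology i)) :
    Epi (HomologicalComplex.homologyMap f i) := by
  have : Epi ((homologyFunctor C (up ℤ) i).map ((quotient C (up ℤ)).map f)) :=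
    ((homologyFunctor C (up ℤ) 0).homologySequence_exact₂ _
      (mappingCone_triangleh_distinguished f) i).epi_f
      ((h.of_iso (homologyQuotientIso _ i)).eq_of_tgt _ _)
  have hnat : HomologicalComplex.homologyMap f i = (homologyQuotientIso K i).inv ≫
      (homologyFunctor C (up ℤ) i).map ((quotient C (up ℤ)).map f) ≫
        (homologyQuotientIso L i).hom := by
    rw [Iso.eq_inv_comp]
    exact ((homologyFunctorFactors C (up ℤ) i).hom.naturality f).symm
  rw [hnat]
  infer_instance

lemma finite_homology {R : Type*} [CommRing R] [IsNoetherianRing R]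
    {K L : CochainComplex (ModuleCat R) ℤ} (f : K ⟶ L) {i : ℤ} (hL : Module.Finite R (L.homology i))
    (hK : Module.Finite R (K.homology (i + 1))) : Module.Finite R ((mappingCone f).homology i) :=
  (Module.Finite.equiv_iff (homologyQuotientIso _ i).toLinearEquiv).mp <|
    ((homologyFunctor _ (up ℤ) 0).homologySequence_exact₃ _
      (mappingCone_triangleh_distinguished f) i (i + 1) rfl).finite_X₂
      ((Module.Finite.equiv_iff (homologyQuotientIso L i).toLinearEquiv).mpr hL)
      ((Module.Finite.equiv_iff (homologyQuotientIso K (i + 1)).toLinearEquiv).mpr hK)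

end CochainComplex.mappingCone

namespace Int

-- `sInf` and `sSup` on `ℤ` are `0` on empty and on unbounded sets; under the hypotheses below
-- `T` is empty, or unbounded on either side, exactly when `S` is, so these cases match up.

variable {S T : Set ℤ} {e : ℕ}

lemma bddBelow_of_forall_exists_sub_mem (hT : ∀ n ∈ T, ∃ k ≤ e, n - k ∈ S) (hS : BddBelow S) :
    BddBelow T := by
  obtain ⟨b, hb⟩ := hS
  refine ⟨b, fun n hn => ?_⟩
  obtain ⟨k, -, hk⟩ := hT n hn
  have := hb hk
  omega

lemma bddAbove_of_forall_exists_sub_mem (hT : ∀ n ∈ T, ∃ k ≤ e, n - k ∈ S) (hS : BddAbove S) :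
    BddAbove T := by
  obtain ⟨b, hb⟩ := hS
  refine ⟨b + e, fun n hn => ?_⟩
  obtain ⟨k, hke, hk⟩ := hT n hn
  have := hb hk
  omega

lemma csInf_eq_of_forall_exists_sub_mem (hST : S ⊆ T) (hT : ∀ n ∈ T, ∃ k ≤ e, n - k ∈ S) :
    sInf T = sInf S := by
  rcases T.eq_empty_or_nonempty with rfl | ⟨n, hn⟩
  · rw [Set.subset_empty_iff.mp hST]
  have hS : S.Nonempty := let ⟨k, _, hk⟩ := hT n hn; ⟨_, hk⟩
  by_cases hb : BddBelow S
  · refine le_antisymm (csInf_le (bddBelow_of_forall_exists_sub_mem hT hb)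
      (hST (Int.csInf_mem hS hb))) (le_csInf ⟨n, hn⟩ fun m hm => ?_)
    obtain ⟨k, -, hk⟩ := hT m hm
    have := csInf_le hb hk
    omega
  · rw [Int.csInf_of_not_bddBelow hb, Int.csInf_of_not_bddBelow fun h => hb (h.mono hST)]

lemma csSup_le_csSup_of_forall_exists_sub_mem (hST : S ⊆ T)
    (hT : ∀ n ∈ T, ∃ k ≤ e, n - k ∈ S) : sSup S ≤ sSup T := by
  rcases S.eq_empty_or_nonempty with rfl | hS
  · rcases T.eq_empty_or_nonempty with rfl | ⟨n, hn⟩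
    · rfl
    · obtain ⟨k, -, hk⟩ := hT n hn
      exact hk.elim
  by_cases hb : BddAbove T
  · exact csSup_le_csSup hb hS hST
  · rw [Int.csSup_of_not_bddAbove hb,
      Int.csSup_of_not_bddAbove fun h => hb (bddAbove_of_forall_exists_sub_mem hT h)]

lemma csSup_le_add_csSup_of_forall_exists_sub_mem (hST : S ⊆ T)
    (hT : ∀ n ∈ T, ∃ k ≤ e, n - k ∈ S) : sSup T ≤ e + sSup S := by
  rcases T.eq_empty_or_nonempty with rfl | ⟨n, hn⟩
  · rw [Set.subset_empty_iff.mp hST, Int.csSup_empty]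
    omega
  by_cases hb : BddAbove S
  · refine csSup_le ⟨n, hn⟩ fun m hm => ?_
    obtain ⟨k, hke, hk⟩ := hT m hm
    have := le_csSup hb hk
    omega
  · rw [Int.csSup_of_not_bddAbove hb, Int.csSup_of_not_bddAbove fun h => hb (h.mono hST)]
    omega

lemma exists_forall_lt_abs_iff {p : ℤ → Prop} :
    (∃ b, ∀ n, b < |n| → p n) ↔ BddBelow {n | ¬ p n} ∧ BddAbove {n | ¬ p n} := by
  constructor
  · rintro ⟨b, hb⟩
    refine ⟨⟨-b, fun n hn => ?_⟩, ⟨b, fun n hn => ?_⟩⟩ <;>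
    · by_contra h
      exact hn (hb n (by rw [lt_abs]; omega))
  · rintro ⟨⟨l, hl⟩, ⟨u, hu⟩⟩
    refine ⟨max (-l) u, fun n hn => ?_⟩
    by_contra h
    have := hl h
    have := hu h
    rw [lt_abs, max_lt_iff, max_lt_iff] at hn
    omega

end Int

section Koszul

variable {R : Type} [CommRing R]

lemma finite_homology_koszulTensor [IsNoetherianRing R] (a : List R)
    {M : CochainComplex (ModuleCat R) ℤ} (hM : ∀ i, Module.Finite R (M.homology i)) (i : ℤ) :
    Module.Finite R ((koszulTensor R a M).homology i) := by
  induction a generalizing i with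
  | nil => exact hM i
  | cons x a ih => exact CochainComplex.mappingCone.finite_homology _ (ih i) (ih (i + 1))

lemma not_isZero_homology_koszulTensor [IsLocalRing R] [IsNoetherianRing R] {a : List R}
    (ha : ∀ x ∈ a, x ∈ maximalIdeal R) {M : CochainComplex (ModuleCat R) ℤ}
    (hM : ∀ i, Module.Finite R (M.homology i)) {i : ℤ} (h : ¬ IsZero (M.homology i)) :
    ¬ IsZero ((koszulTensor R a M).homology i) := by
  induction a with
  | nil => exact h
  | cons x a ih =>
    intro hcone
    have := CochainComplex.mappingCone.epi_homologyMap_of_isZero_homology _ hcone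
    rw [HomologicalComplex.homologyMap_smul, HomologicalComplex.homologyMap_id] at this
    exact ih (fun y hy => ha y (List.mem_cons_of_mem x hy)) <|
      ModuleCat.isZero_of_epi_smul (ha x List.mem_cons_self)
        (finite_homology_koszulTensor a hM i) this

lemma exists_not_isZero_homology_of_not_isZero_koszulTensor {a : List R}
    {M : CochainComplex (ModuleCat R) ℤ} {i : ℤ}
    (h : ¬ IsZero ((koszulTensor R a M).homology i)) :
    ∃ k ≤ a.length, ¬ IsZero (M.homology (i + k)) := by
  induction a generalizing i with
  | nil => exact ⟨0, le_rfl, by rwa [Nat.cast_zero, add_zero]⟩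
  | cons x a ih =>
    by_cases hi : IsZero ((koszulTensor R a M).homology i)
    · obtain ⟨k, hk, hM⟩ := ih fun hi' =>
        h (CochainComplex.mappingCone.isZero_homology_of_isZero _ hi hi')
      refine ⟨k + 1, by simpa using hk, ?_⟩
      rwa [Nat.cast_succ, add_comm (k : ℤ), ← add_assoc]
    · obtain ⟨k, hk, hM⟩ := ih hi
      exact ⟨k, hk.trans (by simp), hM⟩

end Koszul

theorem stmt2 (R : Type) [CommRing R] [IsLocalRing R] [IsNoetherianRing R]
    (a : List R) (ha : ∀ x ∈ a, x ∈ maximalIdeal R)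
    (M : CochainComplex (ModuleCat R) ℤ)
    (hfin : ∀ n : ℤ, Module.Finite R (Hgl M n)) :
    sInf {n : ℤ | ¬ Limits.IsZero (Hgl (koszulTensor R a M) n)} =
      sInf {n : ℤ | ¬ Limits.IsZero (Hgl M n)} ∧
    sSup {n : ℤ | ¬ Limits.IsZero (Hgl M n)} ≤
      sSup {n : ℤ | ¬ Limits.IsZero (Hgl (koszulTensor R a M) n)} ∧
    sSup {n : ℤ | ¬ Limits.IsZero (Hgl (koszulTensor R a M) n)} ≤
      (a.length : ℤ) + sSup {n : ℤ | ¬ Limits.IsZero (Hgl M n)} ∧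
    ((∃ b : ℤ, ∀ n : ℤ, b < |n| → Limits.IsZero (Hgl (koszulTensor R a M) n)) ↔
      (∃ b : ℤ, ∀ n : ℤ, b < |n| → Limits.IsZero (Hgl M n))) := by
  have hM : ∀ i, Module.Finite R (M.homology i) := fun i => neg_neg i ▸ hfin (-i)
  have hST : {n | ¬ IsZero (Hgl M n)} ⊆ {n | ¬ IsZero (Hgl (koszulTensor R a M) n)} :=
    fun n => not_isZero_homology_koszulTensor ha hM
  have hT : ∀ n ∈ {n | ¬ IsZero (Hgl (koszulTensor R a M) n)},
      ∃ k ≤ a.length, n - k ∈ {n | ¬ IsZero (Hgl M n)} := fun n hn => by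
    obtain ⟨k, hk, hMk⟩ := exists_not_isZero_homology_of_not_isZero_koszulTensor hn
    exact ⟨k, hk, show ¬ IsZero (M.homology (-(n - k))) by rwa [neg_sub, sub_eq_neg_add]⟩
  refine ⟨Int.csInf_eq_of_forall_exists_sub_mem hST hT,
    Int.csSup_le_csSup_of_forall_exists_sub_mem hST hT,
    Int.csSup_le_add_csSup_of_forall_exists_sub_mem hST hT, ?_⟩
  rw [Int.exists_forall_lt_abs_iff, Int.exists_forall_lt_abs_iff]
  exact ⟨fun ⟨hl, hu⟩ => ⟨hl.mono hST, hu.mono hST⟩, fun ⟨hl, hu⟩ =>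
    ⟨Int.bddBelow_of_forall_exists_sub_mem hT hl, Int.bddAbove_of_forall_exists_sub_mem hT hu⟩⟩
end
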